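/- arXiv:math/0211456 — 3 statements merged into one kernel-verified Lean document; each statement's English description precedes it below -/
import Mathlib

section
/- Let n ≥ 1 be a natural number, G ∈ ℤ, and let g, d : Fin n → ℤ be functions. Suppose there exist three pairwise distinct positive integers m for which the equality 1 + Σ_{k=1}^{m} (2k−1)(G−1) = n + Σ_{i=1}^{n} Σ_{k=1}^{m} [ (2k−1)(g_i − 1) + (k−1) d_i ] holds in ℤ. Then n = 1, Σ_{i=1}^{n} d_i = 0, and G = Σ_{i=1}^{n} g_i. -/
lemma sum_odd_eq_sq (m : ℕ) : ∑ k ∈ Finset.Icc 1 m, (2 * (k : ℤ) - 1) = (m : ℤ) ^ 2 := by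
  induction m with
  | zero => simp
  | succ m ih =>
      rw [Finset.sum_Icc_succ_top (by omega), ih]
      push_cast; ring

lemma sum_km1 (m : ℕ) : 2 * ∑ k ∈ Finset.Icc 1 m, ((k : ℤ) - 1) = (m : ℤ) * ((m : ℤ) - 1) := by
  induction m with
  | zero => simp
  | succ m ih =>
      rw [Finset.sum_Icc_succ_top (by omega), mul_add, ih]
      push_cast; ring

/-- (Arithmetic core of Theorem 1.4.) If the twisted pluri-genera
equality
`1 + ∑_{k=1}^{m} (2k-1)(G-1) = n + ∑_{i} ∑_{k=1}^{m} ((2k-1)(gᵢ-1) + (k-1)dᵢ)`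
holds for three pairwise distinct positive integers `m`, then `n = 1`,
`∑ dᵢ = 0` and `G = ∑ gᵢ`. -/
theorem stable_curve_plurigenera_equality
    (n : ℕ) (hn : 1 ≤ n) (G : ℤ) (g d : Fin n → ℤ)
    (m₁ m₂ m₃ : ℕ) (hm₁ : 0 < m₁) (hm₂ : 0 < m₂) (hm₃ : 0 < m₃)
    (h₁₂ : m₁ ≠ m₂) (h₁₃ : m₁ ≠ m₃) (h₂₃ : m₂ ≠ m₃)
    (heq : ∀ m ∈ ({m₁, m₂, m₃} : Set ℕ),
      1 + ∑ k ∈ Finset.Icc 1 m, (2 * (k : ℤ) - 1) * (G - 1)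
        = (n : ℤ) + ∑ i : Fin n, ∑ k ∈ Finset.Icc 1 m,
            ((2 * (k : ℤ) - 1) * (g i - 1) + ((k : ℤ) - 1) * d i)) :
    n = 1 ∧ (∑ i : Fin n, d i) = 0 ∧ G = ∑ i : Fin n, g i := by
  set SG : ℤ := ∑ i : Fin n, (g i - 1) with hSG
  set D : ℤ := ∑ i : Fin n, d i with hD
  set a : ℤ := (G - 1) - SG with ha
  -- rewrite each instance of the hypothesis
  have key : ∀ m ∈ ({m₁, m₂, m₃} : Set ℕ),
      2 * (m : ℤ) ^ 2 * a - (m : ℤ) * ((m : ℤ) - 1) * D = 2 * ((n : ℤ) - 1) := by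
    intro m hm
    have h := heq m hm
    have e1 : ∀ i : Fin n,
        ∑ k ∈ Finset.Icc 1 m, ((2 * (k : ℤ) - 1) * (g i - 1) + ((k : ℤ) - 1) * d i)
          = (m : ℤ) ^ 2 * (g i - 1) + (∑ k ∈ Finset.Icc 1 m, ((k : ℤ) - 1)) * d i := by
      intro i
      rw [Finset.sum_add_distrib, ← Finset.sum_mul, ← Finset.sum_mul, sum_odd_eq_sq]
    rw [← Finset.sum_mul, sum_odd_eq_sq, Finset.sum_congr rfl (fun i _ => e1 i),
      Finset.sum_add_distrib, ← Finset.mul_sum, ← Finset.mul_sum] at h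
    have h2 := sum_km1 m
    rw [← hSG, ← hD] at h
    linear_combination 2 * h + D * h2 + 2 * (m : ℤ) ^ 2 * ha
  have k1 := key m₁ (by simp)
  have k2 := key m₂ (by simp)
  have k3 := key m₃ (by simp)
  set x : ℤ := (m₁ : ℤ)
  set y : ℤ := (m₂ : ℤ)
  set z : ℤ := (m₃ : ℤ)
  have hxy : x ≠ y := by simp [x, y]; exact_mod_cast h₁₂
  have hxz : x ≠ z := by simp [x, z]; exact_mod_cast h₁₃
  have hyz : y ≠ z := by simp [y, z]; exact_mod_cast h₂₃
  have e12 : (x - y) * ((2 * a - D) * (x + y) + D) = 0 := by linear_combination k1 - k2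
  have e13 : (x - z) * ((2 * a - D) * (x + z) + D) = 0 := by linear_combination k1 - k3
  have f12 : (2 * a - D) * (x + y) + D = 0 :=
    (mul_eq_zero.1 e12).resolve_left (sub_ne_zero.2 hxy)
  have f13 : (2 * a - D) * (x + z) + D = 0 :=
    (mul_eq_zero.1 e13).resolve_left (sub_ne_zero.2 hxz)
  have g1 : (2 * a - D) * (y - z) = 0 := by linear_combination f12 - f13
  have hq : 2 * a - D = 0 := (mul_eq_zero.1 g1).resolve_right (sub_ne_zero.2 hyz)
  have hD0 : D = 0 := by linear_combination f12 - (x + y) * hq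
  have ha0 : a = 0 := by linarith
  have hc : 2 * ((n : ℤ) - 1) = 0 := by
    rw [← k1, ha0, hD0]; ring
  have hn1 : n = 1 := by
    have : (n : ℤ) = 1 := by linarith
    exact_mod_cast this
  refine ⟨hn1, hD0, ?_⟩
  have hSG' : SG = (∑ i : Fin n, g i) - n := by
    rw [hSG, Finset.sum_sub_distrib]; simp
  have : (G - 1) - ((∑ i : Fin n, g i) - n) = 0 := by rw [← hSG']; exact ha0
  have hnz : (n : ℤ) = 1 := by exact_mod_cast hn1
  linarith
end

section
/- Let p ∈ ℝ[X] be a polynomial with positive leading coefficient and d = deg p, and let h₁, h₂, h₃ : ℝ → ℝ be functions for which there exist constants C > 0 and c > 0 with |h_i(y)| ≤ C·e^{−c·y} for all y (i = 1, 2, 3). Then the function y ↦ y² · ( (p'(y)+h₁(y))² − (p(y)+h₂(y))·(p''(y)+h₃(y)) ) / (p(y)+h₂(y))² tends to d as y → +∞ (the denominator is positive for all sufficiently large y). -/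
open Polynomial Filter

theorem lim1 (p : Polynomial ℝ) (hp : 0 < p.leadingCoeff) :
    Tendsto (fun y => y * p.derivative.eval y / p.eval y) atTop (nhds (p.natDegree : ℝ)) := by
  by_cases h0 : p.natDegree = 0
  · have hder : derivative p = 0 := derivative_of_natDegree_zero h0
    simp [hder, h0]
  · have hdpos : 0 < p.natDegree := Nat.pos_of_ne_zero h0
    have hpne : p ≠ 0 := fun h => by simp [h] at hp
    have hdegp' : (derivative p).degree = ((p.natDegree - 1 : ℕ) : WithBot ℕ) :=
      degree_derivative_eq p hdpos
    have hnd' : (derivative p).natDegree = p.natDegree - 1 :=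
      natDegree_eq_of_degree_eq_some hdegp'
    have hlc' : (derivative p).leadingCoeff = p.leadingCoeff * p.natDegree := by
      rw [leadingCoeff, hnd', coeff_derivative, Nat.sub_add_cancel hdpos,
        ← Nat.cast_add_one, Nat.sub_add_cancel hdpos, coeff_natDegree, mul_comm]
    set q : Polynomial ℝ := X * derivative p with hq
    have hdegq : q.degree = p.degree := by
      rw [hq, degree_mul, degree_X, hdegp', degree_eq_natDegree hpne]
      rw [← Nat.cast_one, ← Nat.cast_add, Nat.add_sub_cancel' hdpos]
    have hlcq : q.leadingCoeff = p.leadingCoeff * p.natDegree := by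
      rw [hq, leadingCoeff_mul, leadingCoeff_X, one_mul, hlc']
    have hval : q.leadingCoeff / p.leadingCoeff = (p.natDegree : ℝ) := by
      rw [hlcq, mul_comm, mul_div_assoc, div_self hp.ne', mul_one]
    have h := Polynomial.div_tendsto_leadingCoeff_div_of_degree_eq q p hdegq
    rw [hval] at h
    exact h.congr fun y => by simp [hq]

theorem lim2 (p : Polynomial ℝ) (hp : 0 < p.leadingCoeff) :
    Tendsto (fun y => y ^ 2 * p.derivative.derivative.eval y / p.eval y) atTop
      (nhds ((p.natDegree : ℝ) * ((p.natDegree : ℝ) - 1))) := by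
  by_cases h0 : p.natDegree ≤ 1
  · have hder : derivative (derivative p) = 0 := by
      apply derivative_of_natDegree_zero
      have := natDegree_derivative_le p
      omega
    interval_cases h : p.natDegree <;> simp [hder, h]
  · push_neg at h0
    have hdpos : 0 < p.natDegree := by omega
    have hpne : p ≠ 0 := fun h => by simp [h] at hp
    have hdegp' : (derivative p).degree = ((p.natDegree - 1 : ℕ) : WithBot ℕ) :=
      degree_derivative_eq p hdpos
    have hnd' : (derivative p).natDegree = p.natDegree - 1 :=
      natDegree_eq_of_degree_eq_some hdegp'
    have hlc' : (derivative p).leadingCoeff = p.leadingCoeff * p.natDegree := by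
      rw [leadingCoeff, hnd', coeff_derivative, Nat.sub_add_cancel hdpos,
        ← Nat.cast_add_one, Nat.sub_add_cancel hdpos, coeff_natDegree, mul_comm]
    have hd'pos : 0 < (derivative p).natDegree := by omega
    have hdegp'' : (derivative (derivative p)).degree
        = (((derivative p).natDegree - 1 : ℕ) : WithBot ℕ) :=
      degree_derivative_eq _ hd'pos
    have hnd'' : (derivative (derivative p)).natDegree = p.natDegree - 2 := by
      rw [natDegree_eq_of_degree_eq_some hdegp'', hnd']; omega
    have hlc'' : (derivative (derivative p)).leadingCoeff
        = p.leadingCoeff * p.natDegree * ((p.natDegree : ℝ) - 1) := by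
      rw [leadingCoeff, hnd'', coeff_derivative]
      have h2 : p.natDegree - 2 + 1 = (derivative p).natDegree := by omega
      rw [h2, coeff_natDegree, hlc', ← Nat.cast_add_one]
      have h3 : p.natDegree - 2 + 1 = p.natDegree - 1 := by omega
      rw [h3, Nat.cast_sub hdpos]
      push_cast; ring
    set q : Polynomial ℝ := X ^ 2 * derivative (derivative p) with hq
    have hdegq : q.degree = p.degree := by
      rw [hq, degree_mul, degree_X_pow, hdegp'', hnd', degree_eq_natDegree hpne]
      rw [← Nat.cast_ofNat, ← Nat.cast_add]
      congr 1; omega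
    have hlcq : q.leadingCoeff = p.leadingCoeff * p.natDegree * ((p.natDegree : ℝ) - 1) := by
      rw [hq, leadingCoeff_mul, leadingCoeff_X_pow, one_mul, hlc'']
    have hval : q.leadingCoeff / p.leadingCoeff
        = (p.natDegree : ℝ) * ((p.natDegree : ℝ) - 1) := by
      rw [hlcq]; field_simp
    have h := Polynomial.div_tendsto_leadingCoeff_div_of_degree_eq q p hdegq
    rw [hval] at h
    exact h.congr fun y => by simp [hq]

theorem lim3 (p : Polynomial ℝ) (hp : 0 < p.leadingCoeff) :
    ∃ ε : ℝ, 0 < ε ∧ ∀ᶠ y in atTop, ε ≤ p.eval y := by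
  by_cases h0 : p.natDegree = 0
  · refine ⟨p.leadingCoeff, hp, Eventually.of_forall fun y => ?_⟩
    conv_rhs => rw [Polynomial.eq_C_of_natDegree_eq_zero h0]
    simp [leadingCoeff, h0]
  · have hdeg : 0 < p.degree := natDegree_pos_iff_degree_pos.mp (Nat.pos_of_ne_zero h0)
    exact ⟨1, one_pos, (p.tendsto_atTop_of_leadingCoeff_nonneg hdeg hp.le).eventually_ge_atTop 1⟩

theorem lim4 (h : ℝ → ℝ) (C c ε : ℝ) (hC : 0 < C) (hc : 0 < c) (hε : 0 < ε)
    (hb : ∀ y : ℝ, |h y| ≤ C * Real.exp (-c * y)) (g : ℝ → ℝ)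
    (hg : ∀ᶠ y in atTop, ε ≤ g y) (k : ℕ) :
    Tendsto (fun y => y ^ k * h y / g y) atTop (nhds 0) := by
  have hx : Tendsto (fun y : ℝ => c * y) atTop atTop :=
    tendsto_id.const_mul_atTop hc
  have h1 : Tendsto (fun y : ℝ => (c * y) ^ k * Real.exp (-(c * y))) atTop (nhds 0) :=
    (Real.tendsto_pow_mul_exp_neg_atTop_nhds_zero k).comp hx
  have h2 : Tendsto (fun y : ℝ => y ^ k * (C * Real.exp (-c * y)) / ε) atTop (nhds 0) := by
    have h3 : Tendsto (fun y : ℝ => (C / c ^ k / ε) * ((c * y) ^ k * Real.exp (-(c * y))))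
        atTop (nhds 0) := by simpa using h1.const_mul (C / c ^ k / ε)
    refine h3.congr fun y => ?_
    rw [mul_pow, neg_mul]
    field_simp
  refine squeeze_zero_norm' ?_ h2
  filter_upwards [hg, eventually_ge_atTop (0 : ℝ)] with y hgy hy0
  have hgpos : 0 < g y := lt_of_lt_of_le hε hgy
  rw [Real.norm_eq_abs, abs_div, abs_mul, abs_of_nonneg (pow_nonneg hy0 k),
    abs_of_pos hgpos, div_le_div_iff₀ hgpos hε]
  apply mul_le_mul
  · exact mul_le_mul_of_nonneg_left (hb y) (pow_nonneg hy0 k)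
  · exact hgy
  · exact hε.le
  · positivity

theorem eq_aux (P P' P'' H1 H2 H3 Y : ℝ) (hP : P ≠ 0) (hPH : P + H2 ≠ 0) :
    Y ^ 2 * ((P' + H1) ^ 2 - (P + H2) * (P'' + H3)) / (P + H2) ^ 2
    = ((Y * P' / P + Y * H1 / P) ^ 2
        - (1 + H2 / P) * (Y ^ 2 * P'' / P + Y ^ 2 * H3 / P)) / (1 + H2 / P) ^ 2 := by
  have h : 1 + H2 / P = (P + H2) / P := by field_simp
  rw [h]
  field_simp


/-- Perturbed version of the asymptotic computation: for a real
polynomial `p` with positive leading coefficient and degree `d`, and exponentially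
decaying perturbations `h₁, h₂, h₃`, the function
`y ↦ y² ((p'(y)+h₁(y))² − (p(y)+h₂(y))(p''(y)+h₃(y))) / (p(y)+h₂(y))²`
tends to `d` as `y → +∞`. -/
theorem poly_curvature_asymptotics_perturbed
    (p : Polynomial ℝ) (hp : 0 < p.leadingCoeff) (d : ℕ) (hd : d = p.natDegree)
    (h₁ h₂ h₃ : ℝ → ℝ) (C c : ℝ) (hC : 0 < C) (hc : 0 < c)
    (hb₁ : ∀ y : ℝ, |h₁ y| ≤ C * Real.exp (-c * y))
    (hb₂ : ∀ y : ℝ, |h₂ y| ≤ C * Real.exp (-c * y))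
    (hb₃ : ∀ y : ℝ, |h₃ y| ≤ C * Real.exp (-c * y)) :
    Tendsto
      (fun y : ℝ =>
        y ^ 2 * ((p.derivative.eval y + h₁ y) ^ 2
            - (p.eval y + h₂ y) * (p.derivative.derivative.eval y + h₃ y))
          / (p.eval y + h₂ y) ^ 2)
      atTop (nhds (d : ℝ)) := by
  subst hd
  obtain ⟨ε, hε, hev⟩ := lim3 p hp
  set D : ℝ := (p.natDegree : ℝ) with hD
  have hA := lim1 p hp
  have hB := lim2 p hp
  have ha : Tendsto (fun y => y * h₁ y / p.eval y) atTop (nhds 0) :=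
    (lim4 h₁ C c ε hC hc hε hb₁ _ hev 1).congr fun y => by rw [pow_one]
  have hb : Tendsto (fun y => h₂ y / p.eval y) atTop (nhds 0) :=
    (lim4 h₂ C c ε hC hc hε hb₂ _ hev 0).congr fun y => by rw [pow_zero, one_mul]
  have he : Tendsto (fun y => y ^ 2 * h₃ y / p.eval y) atTop (nhds 0) :=
    lim4 h₃ C c ε hC hc hε hb₃ _ hev 2
  have hden : Tendsto (fun y => (1 + h₂ y / p.eval y) ^ 2) atTop (nhds 1) := by
    have := ((tendsto_const_nhds (x := (1 : ℝ))).add hb).pow 2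
    simpa using this
  have hnum : Tendsto
      (fun y => (y * p.derivative.eval y / p.eval y + y * h₁ y / p.eval y) ^ 2
        - (1 + h₂ y / p.eval y)
            * (y ^ 2 * p.derivative.derivative.eval y / p.eval y
              + y ^ 2 * h₃ y / p.eval y))
      atTop (nhds ((D + 0) ^ 2 - (1 + 0) * (D * (D - 1) + 0))) :=
    ((hA.add ha).pow 2).sub (((tendsto_const_nhds (x := (1 : ℝ))).add hb).mul (hB.add he))
  have hG := hnum.div hden one_ne_zero
  have hval : ((D + 0) ^ 2 - (1 + 0) * (D * (D - 1) + 0)) / 1 = D := by ring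
  rw [hval] at hG
  refine hG.congr' ?_
  have hexp : Tendsto (fun y : ℝ => C * Real.exp (-c * y)) atTop (nhds 0) := by
    have h1 : Tendsto (fun y : ℝ => Real.exp (-(c * y))) atTop (nhds 0) :=
      Real.tendsto_exp_neg_atTop_nhds_zero.comp (tendsto_id.const_mul_atTop hc)
    have := h1.const_mul C
    simpa [neg_mul] using this
  have hsm : ∀ᶠ y in atTop, C * Real.exp (-c * y) < ε :=
    hexp.eventually_lt_const hε
  filter_upwards [hev, hsm] with y h1y h2y
  have hp0 : p.eval y ≠ 0 := (hε.trans_le h1y).ne'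
  have habs : -ε < h₂ y := by
    have := (hb₂ y).trans_lt h2y
    have := abs_lt.mp this
    linarith [this.1]
  have hph : p.eval y + h₂ y ≠ 0 := by nlinarith
  exact (eq_aux (p.eval y) (p.derivative.eval y) (p.derivative.derivative.eval y)
    (h₁ y) (h₂ y) (h₃ y) y hp0 hph).symm
end

section
/- Let y₀ ∈ ℝ, let G : ℝ → ℝ be a continuous function with G ≥ 0, and suppose there exist constants d ≥ 1, C > 0 and c > 0 such that G(y) ≥ d/y² − C·e^{−c·y} for all y ≥ y₀. Then for every continuously differentiable curve γ : [0, ∞) → ℂ such that Im γ(t) ≥ y₀ for all t and the function t ↦ Im γ(t) is unbounded above, the length ∫_{0}^{∞} √(G(Im γ(t))) · |γ'(t)| dt is infinite. -/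
open MeasureTheory Set

/-- If a continuous nonnegative conformal density `G` satisfies
`G(y) ≥ d/y² − C e^{−cy}` for `y ≥ y₀` with `d ≥ 1`, then every C¹ curve
`γ : [0, ∞) → ℂ` staying in `{Im z ≥ y₀}` whose imaginary part is unbounded above
has infinite length `∫₀^∞ √(G (Im γ t)) |γ'(t)| dt` in the metric `G(Im z)|dz|²`. -/
theorem escaping_curve_infinite_length
    (y₀ : ℝ) (G : ℝ → ℝ) (hGcont : Continuous G) (hGnonneg : ∀ y : ℝ, 0 ≤ G y)
    (d C c : ℝ) (hd : 1 ≤ d) (hC : 0 < C) (hc : 0 < c)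
    (hGlb : ∀ y : ℝ, y₀ ≤ y → d / y ^ 2 - C * Real.exp (-c * y) ≤ G y) :
    ∀ γ : ℝ → ℂ, ContDiffOn ℝ 1 γ (Set.Ici 0) →
      (∀ t : ℝ, 0 ≤ t → y₀ ≤ (γ t).im) →
      ¬ BddAbove ((fun t : ℝ => (γ t).im) '' Set.Ici 0) →
      ∫⁻ t in Set.Ici (0 : ℝ),
          ENNReal.ofReal
            (Real.sqrt (G (γ t).im) * ‖derivWithin γ (Set.Ici 0) t‖) = ⊤ := by
  intro γ hγ hlow hub
  set y : ℝ → ℝ := fun t => (γ t).im with hydef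
  set y' : ℝ → ℝ := fun t => (derivWithin γ (Set.Ici 0) t).im with hy'def
  -- Step 1: choose `Y` beyond which `C e^{-cy} ≤ (2y²)⁻¹`.
  have h0 : Filter.Tendsto (fun u : ℝ => u ^ 2 * Real.exp (-c * u))
      Filter.atTop (nhds 0) := by
    have h := tendsto_rpow_mul_exp_neg_mul_atTop_nhds_zero 2 c hc
    refine h.congr' ?_
    filter_upwards [Filter.eventually_ge_atTop (0:ℝ)] with u hu
    rw [show ((2:ℝ)) = ((2:ℕ):ℝ) by norm_num, Real.rpow_natCast]
  have hev : ∀ᶠ u in Filter.atTop, u ^ 2 * Real.exp (-c * u) < (2 * C)⁻¹ :=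
    h0.eventually_lt_const (by positivity)
  obtain ⟨a, ha⟩ := Filter.eventually_atTop.1 hev
  set Y : ℝ := max a (max y₀ 1) with hYdef
  have hY1 : (1:ℝ) ≤ Y := le_trans (le_max_right y₀ 1) (le_max_right _ _)
  have hYy0 : y₀ ≤ Y := le_trans (le_max_left y₀ 1) (le_max_right _ _)
  have hYpos : (0:ℝ) < Y := lt_of_lt_of_le one_pos hY1
  have hs2pos : (0:ℝ) < Real.sqrt 2 := Real.sqrt_pos.2 (by norm_num)
  -- the key pointwise lower bound for `√G` beyond `Y`
  have hGhalf : ∀ u : ℝ, Y ≤ u → (Real.sqrt 2 * u)⁻¹ ≤ Real.sqrt (G u) := by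
    intro u hu
    have hu1 : (1:ℝ) ≤ u := le_trans hY1 hu
    have hupos : (0:ℝ) < u := lt_of_lt_of_le one_pos hu1
    have hexp : C * Real.exp (-c * u) ≤ (2 * u ^ 2)⁻¹ := by
      have h1 : u ^ 2 * Real.exp (-c * u) ≤ (2 * C)⁻¹ :=
        (ha u (le_trans (le_max_left _ _) hu)).le
      have h2 : C * Real.exp (-c * u) = (C / u ^ 2) * (u ^ 2 * Real.exp (-c * u)) := by
        field_simp
      have h3 : (C / u ^ 2) * (2 * C)⁻¹ = (2 * u ^ 2)⁻¹ := by
        rw [div_mul_eq_mul_div, mul_inv]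
        field_simp
      calc C * Real.exp (-c * u)
          = (C / u ^ 2) * (u ^ 2 * Real.exp (-c * u)) := h2
        _ ≤ (C / u ^ 2) * (2 * C)⁻¹ :=
            mul_le_mul_of_nonneg_left h1 (by positivity)
        _ = (2 * u ^ 2)⁻¹ := h3
    have hGlow : (2 * u ^ 2)⁻¹ ≤ G u := by
      have h4 := hGlb u (le_trans hYy0 hu)
      have h5 : (1:ℝ) / u ^ 2 ≤ d / u ^ 2 := by gcongr
      have h6 : (2 * u ^ 2)⁻¹ + (2 * u ^ 2)⁻¹ = 1 / u ^ 2 := by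
        field_simp; ring
      linarith
    rw [Real.le_sqrt (by positivity) (hGnonneg u)]
    calc ((Real.sqrt 2 * u)⁻¹) ^ 2 = ((Real.sqrt 2) ^ 2 * u ^ 2)⁻¹ := by
          rw [inv_pow, mul_pow]
      _ = (2 * u ^ 2)⁻¹ := by rw [Real.sq_sqrt (by norm_num : (0:ℝ) ≤ 2)]
      _ ≤ G u := hGlow
  -- Step 2: the comparison density `g` and its antiderivative `Φ`.
  set g : ℝ → ℝ := fun u => min (Real.sqrt (G u)) ((Real.sqrt 2 * max u Y)⁻¹) with hgdef
  have hmaxpos : ∀ u : ℝ, (0:ℝ) < Real.sqrt 2 * max u Y :=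
    fun u => mul_pos hs2pos (lt_of_lt_of_le hYpos (le_max_right u Y))
  have hgcont : Continuous g := by
    refine (hGcont.sqrt).min (Continuous.inv₀ ?_ ?_)
    · exact continuous_const.mul (continuous_id.max continuous_const)
    · exact fun u => (hmaxpos u).ne'
  have hgnonneg : ∀ u, 0 ≤ g u :=
    fun u => le_min (Real.sqrt_nonneg _) (le_of_lt (inv_pos.2 (hmaxpos u)))
  have hgle : ∀ u, g u ≤ Real.sqrt (G u) := fun u => min_le_left _ _
  have hgge : ∀ u : ℝ, Y ≤ u → (Real.sqrt 2 * u)⁻¹ ≤ g u := by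
    intro u hu
    exact le_min (hGhalf u hu) (by rw [max_eq_left hu])
  set Φ : ℝ → ℝ := fun x => ∫ u in (y 0)..x, g u with hΦdef
  have hgint : ∀ p q : ℝ, IntervalIntegrable g volume p q :=
    fun p q => hgcont.intervalIntegrable p q
  have hΦsub : ∀ p q : ℝ, Φ q - Φ p = ∫ u in p..q, g u := by
    intro p q
    have := intervalIntegral.integral_add_adjacent_intervals
      (hgint (y 0) p) (hgint p q)
    simp only [hΦdef]
    linarith [this]
  have hΦmono : Monotone Φ := by
    intro p q hpq
    have h1 := hΦsub p q
    have h2 : 0 ≤ ∫ u in p..q, g u :=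
      intervalIntegral.integral_nonneg hpq (fun u _ => hgnonneg u)
    linarith
  have hΦderiv : ∀ x : ℝ, HasDerivAt Φ (g x) x := by
    intro x
    exact intervalIntegral.integral_hasDerivAt_right (hgint _ _)
      (hgcont.stronglyMeasurableAtFilter _ _) hgcont.continuousAt
  have hΦcont : Continuous Φ :=
    continuous_iff_continuousAt.2 fun x => (hΦderiv x).continuousAt
  -- growth of Φ
  have hΦgrow : ∀ x : ℝ, Y ≤ x →
      Φ Y + (Real.sqrt 2)⁻¹ * (Real.log x - Real.log Y) ≤ Φ x := by
    intro x hx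
    have hxpos : (0:ℝ) < x := lt_of_lt_of_le hYpos hx
    have hinvcont : ContinuousOn (fun u : ℝ => (Real.sqrt 2 * u)⁻¹) (Icc Y x) := by
      refine ContinuousOn.inv₀ (continuous_const.mul continuous_id).continuousOn ?_
      intro u hu
      exact (mul_pos hs2pos (lt_of_lt_of_le hYpos hu.1)).ne'
    have hint1 : IntervalIntegrable (fun u : ℝ => (Real.sqrt 2 * u)⁻¹) volume Y x :=
      hinvcont.intervalIntegrable_of_Icc hx
    have hmono : ∫ u in Y..x, (Real.sqrt 2 * u)⁻¹ ≤ ∫ u in Y..x, g u :=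
      intervalIntegral.integral_mono_on hx hint1 (hgint Y x)
        (fun u hu => hgge u hu.1)
    have hcomp : ∫ u in Y..x, (Real.sqrt 2 * u)⁻¹
        = (Real.sqrt 2)⁻¹ * (Real.log x - Real.log Y) := by
      have h1 : ∀ u : ℝ, (Real.sqrt 2 * u)⁻¹ = (Real.sqrt 2)⁻¹ * u⁻¹ := by
        intro u; rw [mul_inv]
      simp only [h1]
      rw [intervalIntegral.integral_const_mul, integral_inv]
      · rw [Real.log_div hxpos.ne' hYpos.ne']
      · intro hmem
        rw [Set.uIcc_of_le hx] at hmem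
        exact absurd hmem.1 (not_le.2 hYpos)
    have := hΦsub Y x
    linarith [hmono, hcomp.symm.le, hcomp.le]
  -- derivative facts for the imaginary part
  have hyd : ∀ t ∈ Set.Ici (0:ℝ), HasDerivWithinAt y (y' t) (Set.Ici 0) t := by
    intro t ht
    have h1 : HasDerivWithinAt γ (derivWithin γ (Set.Ici 0) t) (Set.Ici 0) t :=
      (hγ.differentiableOn one_ne_zero t ht).hasDerivWithinAt
    exact Complex.imCLM.hasFDerivAt.comp_hasDerivWithinAt t h1
  have hycont : ContinuousOn y (Set.Ici 0) :=
    Complex.continuous_im.comp_continuousOn hγ.continuousOn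
  have hy'cont : ContinuousOn y' (Set.Ici 0) := by
    have hd' : ContDiffOn ℝ 0 (derivWithin γ (Set.Ici 0)) (Set.Ici 0) :=
      hγ.derivWithin (uniqueDiffOn_Ici 0) (by norm_num)
    exact Complex.continuous_im.comp_continuousOn hd'.continuousOn
  have hptwise : ∀ t : ℝ, g (y t) * |y' t|
      ≤ Real.sqrt (G (y t)) * ‖derivWithin γ (Set.Ici 0) t‖ := by
    intro t
    have h1 : |y' t| ≤ ‖derivWithin γ (Set.Ici 0) t‖ := by
      simpa using Complex.abs_im_le_norm (derivWithin γ (Set.Ici 0) t)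
    exact mul_le_mul (hgle _) h1 (abs_nonneg _) (Real.sqrt_nonneg _)
  -- main estimate: for every `M`, the length exceeds `M`.
  refine ENNReal.eq_top_of_forall_nnreal_le fun r => ?_
  set M : ℝ := (r : ℝ) with hMdef
  -- choose a height `x✶` at which `Φ ≥ M`
  set x₁ : ℝ := Y * Real.exp (max (Real.sqrt 2 * (M - Φ Y)) 0) with hx₁def
  have hx₁Y : Y ≤ x₁ := by
    have : (1:ℝ) ≤ Real.exp (max (Real.sqrt 2 * (M - Φ Y)) 0) :=
      Real.one_le_exp (le_max_right _ _)
    calc Y = Y * 1 := (mul_one Y).symm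
      _ ≤ x₁ := by exact mul_le_mul_of_nonneg_left this hYpos.le
  have hΦx₁ : M ≤ Φ x₁ := by
    have h1 := hΦgrow x₁ hx₁Y
    have h2 : Real.log x₁ - Real.log Y = max (Real.sqrt 2 * (M - Φ Y)) 0 := by
      rw [hx₁def, Real.log_mul hYpos.ne' (Real.exp_pos _).ne', Real.log_exp]
      ring
    have h3 : Real.sqrt 2 * (M - Φ Y) ≤ max (Real.sqrt 2 * (M - Φ Y)) 0 :=
      le_max_left _ _
    have h4 : (Real.sqrt 2)⁻¹ * (Real.sqrt 2 * (M - Φ Y))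
        ≤ (Real.sqrt 2)⁻¹ * (Real.log x₁ - Real.log Y) := by
      rw [h2]; exact mul_le_mul_of_nonneg_left h3 (by positivity)
    have h5 : (Real.sqrt 2)⁻¹ * (Real.sqrt 2 * (M - Φ Y)) = M - Φ Y := by
      rw [← mul_assoc, inv_mul_cancel₀ hs2pos.ne', one_mul]
    linarith
  -- find a time `T` where the curve exceeds `x₁`
  obtain ⟨v, hv, hvx⟩ := not_bddAbove_iff.1 hub x₁
  obtain ⟨T, hT0, rfl⟩ := hv
  have hT0' : (0:ℝ) ≤ T := hT0
  -- FTC on `[0, T]`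
  have hΦycont : ContinuousOn (Φ ∘ y) (Icc 0 T) :=
    hΦcont.comp_continuousOn (hycont.mono Icc_subset_Ici_self)
  have hderivs : ∀ t ∈ Ioo (0:ℝ) T,
      HasDerivWithinAt (Φ ∘ y) (g (y t) * y' t) (Ioi t) t := by
    intro t ht
    have hyt : HasDerivAt y (y' t) t :=
      (hyd t (le_of_lt ht.1)).hasDerivAt (Ici_mem_nhds ht.1)
    exact (((hΦderiv (y t)).comp t hyt)).hasDerivWithinAt
  have hcont1 : ContinuousOn (fun t => g (y t) * y' t) (Icc 0 T) :=
    ((hgcont.comp_continuousOn (hycont.mono Icc_subset_Ici_self)).mul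
      (hy'cont.mono Icc_subset_Ici_self))
  have hcont2 : ContinuousOn (fun t => g (y t) * |y' t|) (Icc 0 T) :=
    ((hgcont.comp_continuousOn (hycont.mono Icc_subset_Ici_self)).mul
      (hy'cont.mono Icc_subset_Ici_self).abs)
  have hint1 : IntervalIntegrable (fun t => g (y t) * y' t) volume 0 T :=
    hcont1.intervalIntegrable_of_Icc hT0'
  have hint2 : IntervalIntegrable (fun t => g (y t) * |y' t|) volume 0 T :=
    hcont2.intervalIntegrable_of_Icc hT0'
  have hftc : ∫ t in (0:ℝ)..T, g (y t) * y' t = Φ (y T) - Φ (y 0) :=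
    intervalIntegral.integral_eq_sub_of_hasDeriv_right_of_le hT0' hΦycont hderivs hint1
  have hΦy0 : Φ (y 0) = 0 := intervalIntegral.integral_same
  have hmono1 : ∫ t in (0:ℝ)..T, g (y t) * y' t
      ≤ ∫ t in (0:ℝ)..T, g (y t) * |y' t| :=
    intervalIntegral.integral_mono_on hT0' hint1 hint2
      (fun t _ => mul_le_mul_of_nonneg_left (le_abs_self _) (hgnonneg _))
  have hMle : M ≤ ∫ t in (0:ℝ)..T, g (y t) * |y' t| := by
    have hΦT : M ≤ Φ (y T) := le_trans hΦx₁ (hΦmono hvx.le)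
    linarith [hftc, hmono1]
  -- pass to the lintegral
  have hIoc : ∫ t in (0:ℝ)..T, g (y t) * |y' t|
      = ∫ t in Ioc (0:ℝ) T, g (y t) * |y' t| :=
    intervalIntegral.integral_of_le hT0'
  have hintOn : IntegrableOn (fun t => g (y t) * |y' t|) (Ioc (0:ℝ) T) volume :=
    hint2.1
  have heq : ENNReal.ofReal (∫ t in Ioc (0:ℝ) T, g (y t) * |y' t|)
      = ∫⁻ t in Ioc (0:ℝ) T, ENNReal.ofReal (g (y t) * |y' t|) :=
    ofReal_integral_eq_lintegral_ofReal hintOn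
      (Filter.Eventually.of_forall fun t => mul_nonneg (hgnonneg _) (abs_nonneg _))
  calc (r : ENNReal) = ENNReal.ofReal M := by
        rw [hMdef, ENNReal.ofReal_coe_nnreal]
    _ ≤ ENNReal.ofReal (∫ t in Ioc (0:ℝ) T, g (y t) * |y' t|) := by
        rw [← hIoc]; exact ENNReal.ofReal_le_ofReal hMle
    _ = ∫⁻ t in Ioc (0:ℝ) T, ENNReal.ofReal (g (y t) * |y' t|) := heq
    _ ≤ ∫⁻ t in Ioc (0:ℝ) T,
          ENNReal.ofReal (Real.sqrt (G (y t)) * ‖derivWithin γ (Set.Ici 0) t‖) :=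
        lintegral_mono fun t => ENNReal.ofReal_le_ofReal (hptwise t)
    _ ≤ ∫⁻ t in Set.Ici (0:ℝ),
          ENNReal.ofReal (Real.sqrt (G (y t)) * ‖derivWithin γ (Set.Ici 0) t‖) :=
        lintegral_mono_set (fun t ht => le_of_lt ht.1)
end
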